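/- arXiv:1804.03812 — 3 statements merged into one kernel-verified Lean document; each statement's English description precedes it below -/
import Mathlib

section
/- Let p > 1, let f : ℝ → ℝ be continuous, and let t̃ > 0. Suppose the map t ↦ f(t)/(|t|^{p-2} t) is monotone increasing on [t̃, ∞) and monotone decreasing on (−∞, −t̃]. Then the function F̃(t) = f(t)·t − p·F(t) is monotone increasing on [t̃, ∞) and monotone decreasing on (−∞, −t̃]. -/
lemma key_pos (p : ℝ) (hp : 1 < p) (f : ℝ → ℝ) (hf : Continuous f)
    (t0 : ℝ) (ht0 : 0 < t0)
    (hinc : MonotoneOn (fun t => f t / (|t| ^ (p - 2) * t)) (Set.Ici t0)) :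
    MonotoneOn (fun t => f t * t - p * ∫ s in (0:ℝ)..t, f s) (Set.Ici t0) := by
  set g : ℝ → ℝ := fun t => f t / (|t| ^ (p - 2) * t) with hgdef
  have hrep : ∀ u : ℝ, t0 ≤ u → |u| ^ (p-2) * u = u ^ (p-1) := by
    intro u hu
    have hu0 : 0 < u := lt_of_lt_of_le ht0 hu
    rw [abs_of_pos hu0, ← Real.rpow_add_one hu0.ne', show p - 2 + 1 = p - 1 by ring]
  have hfu : ∀ u : ℝ, t0 ≤ u → f u = g u * u ^ (p-1) := by
    intro u hu
    have hu0 : 0 < u := lt_of_lt_of_le ht0 hu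
    have hne : u ^ (p-1) ≠ 0 := (Real.rpow_pos_of_pos hu0 _).ne'
    rw [hgdef]
    simp only
    rw [hrep u hu]
    field_simp
  intro s hs t ht hst
  simp only [Set.mem_Ici] at hs ht
  have hs0 : 0 < s := lt_of_lt_of_le ht0 hs
  have ht0' : 0 < t := lt_of_lt_of_le ht0 ht
  have hp0 : (0:ℝ) < p := by linarith
  have hint : ∫ u in (0:ℝ)..t, f u = (∫ u in (0:ℝ)..s, f u) + ∫ u in s..t, f u :=
    (intervalIntegral.integral_add_adjacent_intervals
      (hf.intervalIntegrable _ _) (hf.intervalIntegrable _ _)).symm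
  have hcmp : ∫ u in s..t, f u ≤ ∫ u in s..t, g t * u ^ (p-1) := by
    apply intervalIntegral.integral_mono_on hst (hf.intervalIntegrable _ _)
    · apply ContinuousOn.intervalIntegrable
      apply continuousOn_const.mul
      apply ContinuousOn.rpow_const continuousOn_id
      intro x hx
      rw [Set.uIcc_of_le hst] at hx
      exact Or.inl (lt_of_lt_of_le ht0 (le_trans hs hx.1)).ne'
    · intro u hu
      have hu0 : t0 ≤ u := le_trans hs hu.1
      rw [hfu u hu0]
      have hgle : g u ≤ g t := hinc (Set.mem_Ici.mpr hu0) (Set.mem_Ici.mpr ht) hu.2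
      exact mul_le_mul_of_nonneg_right hgle
        (Real.rpow_nonneg (le_of_lt (lt_of_lt_of_le ht0 hu0)) _)
  have hcalc : ∫ u in s..t, g t * u ^ (p-1) = g t * ((t ^ p - s ^ p)/p) := by
    rw [intervalIntegral.integral_const_mul, integral_rpow (Or.inl (by linarith))]
    rw [show p - 1 + 1 = p by ring]
  have h1 : p * ∫ u in s..t, f u ≤ g t * (t ^ p - s ^ p) := by
    calc p * ∫ u in s..t, f u ≤ p * (g t * ((t ^ p - s ^ p)/p)) := by
          apply mul_le_mul_of_nonneg_left _ hp0.le
          rw [← hcalc]; exact hcmp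
      _ = g t * (t ^ p - s ^ p) := by field_simp
  have hgle : g s ≤ g t := hinc (Set.mem_Ici.mpr hs) (Set.mem_Ici.mpr ht) hst
  have h2 : g s * s ^ p ≤ g t * s ^ p :=
    mul_le_mul_of_nonneg_right hgle (Real.rpow_nonneg hs0.le _)
  have hft : f t * t = g t * t ^ p := by
    rw [hfu t ht, mul_assoc, ← Real.rpow_add_one ht0'.ne', show p - 1 + 1 = p by ring]
  have hfs : f s * s = g s * s ^ p := by
    rw [hfu s hs, mul_assoc, ← Real.rpow_add_one hs0.ne', show p - 1 + 1 = p by ring]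
  simp only
  rw [hint, hft, hfs]
  linarith

/-- If `p > 1`, `f` is continuous, `t0 > 0`, and the map
`t ↦ f t / (|t|^(p-2) * t)` is monotone increasing on `[t0, ∞)` and monotone
decreasing on `(-∞, -t0]`, then `F̃ t = f t * t - p * F t` (where
`F t = ∫₀ᵗ f`) is monotone increasing on `[t0, ∞)` and monotone decreasing
on `(-∞, -t0]`. -/
theorem stmt_0 (p : ℝ) (hp : 1 < p) (f : ℝ → ℝ) (hf : Continuous f)
    (t0 : ℝ) (ht0 : 0 < t0)
    (hinc : MonotoneOn (fun t => f t / (|t| ^ (p - 2) * t)) (Set.Ici t0))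
    (hdec : AntitoneOn (fun t => f t / (|t| ^ (p - 2) * t)) (Set.Iic (-t0))) :
    MonotoneOn (fun t => f t * t - p * ∫ s in (0:ℝ)..t, f s) (Set.Ici t0) ∧
    AntitoneOn (fun t => f t * t - p * ∫ s in (0:ℝ)..t, f s) (Set.Iic (-t0)) := by
  constructor
  · exact key_pos p hp f hf t0 ht0 hinc
  · set f2 : ℝ → ℝ := fun x => -f (-x) with hf2def
    have hf2c : Continuous f2 := (hf.comp continuous_neg).neg
    have hg2 : ∀ τ : ℝ, t0 ≤ τ →
        f2 τ / (|τ| ^ (p - 2) * τ) = f (-τ) / (|(-τ)| ^ (p - 2) * (-τ)) := by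
      intro τ hτ
      rw [hf2def]
      simp only [abs_neg]
      rw [mul_neg, div_neg, neg_div]
    have hinc2 : MonotoneOn (fun t => f2 t / (|t| ^ (p - 2) * t)) (Set.Ici t0) := by
      intro a ha b hb hab
      simp only [Set.mem_Ici] at ha hb
      simp only
      rw [hg2 a ha, hg2 b hb]
      exact hdec (Set.mem_Iic.mpr (by linarith)) (Set.mem_Iic.mpr (by linarith))
        (by linarith)
    have hmono2 := key_pos p hp f2 hf2c t0 ht0 hinc2
    have hval : ∀ τ : ℝ, (f2 τ * τ - p * ∫ s in (0:ℝ)..τ, f2 s) =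
        (f (-τ) * (-τ) - p * ∫ s in (0:ℝ)..(-τ), f s) := by
      intro τ
      have : ∫ s in (0:ℝ)..τ, f2 s = ∫ s in (0:ℝ)..(-τ), f s := by
        rw [hf2def]
        rw [intervalIntegral.integral_neg]
        rw [show (fun s : ℝ => f (-s)) = fun s => f (-s) from rfl]
        rw [intervalIntegral.integral_comp_neg f]
        rw [neg_zero]
        rw [intervalIntegral.integral_symm]
        ring
      rw [this, hf2def]
      ring
    intro a ha b hb hab
    simp only [Set.mem_Iic] at ha hb
    simp only
    have h1 := hval (-a)
    have h2 := hval (-b)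
    rw [neg_neg] at h1 h2
    have := hmono2 (Set.mem_Ici.mpr (by linarith : t0 ≤ -b))
      (Set.mem_Ici.mpr (by linarith : t0 ≤ -a)) (by linarith)
    simp only at this
    rw [h1, h2] at this
    exact this
end

section
/- Let p > 1, let f : ℝ → ℝ be continuous, and let t̃ > 0. Suppose the map t ↦ f(t)/(|t|^{p-2} t) is monotone increasing on [t̃, ∞) and monotone decreasing on (−∞, −t̃]. Then there exists a constant C₁ > 0 such that F̃(s) ≤ F̃(t) + C₁ whenever 0 ≤ s ≤ t or t ≤ s ≤ 0, where F̃(t) = f(t)·t − p·F(t). -/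
lemma pos_mono (p : ℝ) (hp : 1 < p) (f : ℝ → ℝ) (hf : Continuous f)
    (t0 : ℝ) (ht0 : 0 < t0)
    (hinc : MonotoneOn (fun t => f t / (|t| ^ (p - 2) * t)) (Set.Ici t0)) :
    ∀ s t : ℝ, t0 ≤ s → s ≤ t →
      f s * s - p * ∫ u in (0:ℝ)..s, f u ≤ f t * t - p * ∫ u in (0:ℝ)..t, f u := by
  intro s t hs hst
  set g : ℝ → ℝ := fun u => f u / (|u| ^ (p - 2) * u) with hg
  have hp0 : (0:ℝ) < p := by linarith
  have habs : ∀ u : ℝ, t0 ≤ u → |u| ^ (p - 2) * u = u ^ (p - 1) := by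
    intro u hu
    have hu0 : 0 < u := lt_of_lt_of_le ht0 hu
    rw [abs_of_pos hu0, show p - 1 = (p - 2) + 1 by ring, Real.rpow_add hu0,
      Real.rpow_one]
  have hne : ∀ u : ℝ, t0 ≤ u → u ^ (p - 1) ≠ 0 := by
    intro u hu
    exact (Real.rpow_pos_of_pos (lt_of_lt_of_le ht0 hu) _).ne'
  have hfu : ∀ u : ℝ, t0 ≤ u → f u = g u * u ^ (p - 1) := by
    intro u hu
    rw [hg]; simp only
    rw [habs u hu, div_mul_cancel₀ _ (hne u hu)]
  have hft : ∀ u : ℝ, t0 ≤ u → f u * u = g u * u ^ p := by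
    intro u hu
    have hu0 : 0 < u := lt_of_lt_of_le ht0 hu
    have h1 : u ^ (p - 1) * u ^ (1:ℝ) = u ^ p := by
      rw [← Real.rpow_add hu0]; norm_num
    rw [Real.rpow_one] at h1
    rw [← h1, ← mul_assoc, ← hfu u hu]
  have hts : t0 ≤ t := le_trans hs hst
  -- key integral inequality
  have hint1 : IntervalIntegrable f MeasureTheory.volume s t := hf.intervalIntegrable s t
  have hcont2 : ContinuousOn (fun u : ℝ => g t * u ^ (p - 1)) (Set.uIcc s t) := by
    apply ContinuousOn.mul continuousOn_const
    exact ContinuousOn.rpow_const continuousOn_id (fun x _ => Or.inr (by linarith))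
  have hint2 : IntervalIntegrable (fun u : ℝ => g t * u ^ (p - 1))
      MeasureTheory.volume s t := hcont2.intervalIntegrable
  have hle : ∀ u ∈ Set.Icc s t, f u ≤ g t * u ^ (p - 1) := by
    intro u hu
    have hu0 : t0 ≤ u := le_trans hs hu.1
    rw [hfu u hu0]
    have hgle : g u ≤ g t := hinc hu0 hts hu.2
    exact mul_le_mul_of_nonneg_right hgle
      (Real.rpow_nonneg (le_of_lt (lt_of_lt_of_le ht0 hu0)) _)
  have hI : (∫ u in s..t, f u) ≤ g t * ((t ^ p - s ^ p) / p) := by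
    have h1 := intervalIntegral.integral_mono_on hst hint1 hint2 hle
    have h2 : (∫ u in s..t, g t * u ^ (p - 1)) = g t * ((t ^ p - s ^ p) / p) := by
      rw [intervalIntegral.integral_const_mul]
      have h3 : (∫ u in s..t, u ^ (p - 1)) = (t ^ (p - 1 + 1) - s ^ (p - 1 + 1)) / (p - 1 + 1) :=
        integral_rpow (Or.inl (by linarith))
      rw [h3, show p - 1 + 1 = p by ring]
    rw [h2] at h1; exact h1
  have hsplit : (∫ u in (0:ℝ)..t, f u) = (∫ u in (0:ℝ)..s, f u) + ∫ u in s..t, f u :=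
    (intervalIntegral.integral_add_adjacent_intervals (hf.intervalIntegrable 0 s)
      (hf.intervalIntegrable s t)).symm
  rw [hft s hs, hft t hts, hsplit]
  have hgle : g s ≤ g t := hinc hs hts hst
  have hsp : (0:ℝ) ≤ s ^ p := Real.rpow_nonneg (le_of_lt (lt_of_lt_of_le ht0 hs)) _
  have h2 : p * (∫ u in s..t, f u) ≤ g t * (t ^ p - s ^ p) := by
    have h3 := mul_le_mul_of_nonneg_left hI (le_of_lt hp0)
    have h4 : p * (g t * ((t ^ p - s ^ p) / p)) = g t * (t ^ p - s ^ p) := by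
      field_simp
    linarith
  nlinarith [mul_le_mul_of_nonneg_right hgle hsp, h2]

lemma pos_half (p : ℝ) (hp : 1 < p) (f : ℝ → ℝ) (hf : Continuous f)
    (t0 : ℝ) (ht0 : 0 < t0)
    (hmono : ∀ s t : ℝ, t0 ≤ s → s ≤ t →
      f s * s - p * ∫ u in (0:ℝ)..s, f u ≤ f t * t - p * ∫ u in (0:ℝ)..t, f u) :
    ∃ C : ℝ, 0 < C ∧ ∀ s t : ℝ, 0 ≤ s → s ≤ t →
      f s * s - p * ∫ u in (0:ℝ)..s, f u ≤
        (f t * t - p * ∫ u in (0:ℝ)..t, f u) + C := by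
  set Ft : ℝ → ℝ := fun t => f t * t - p * ∫ u in (0:ℝ)..t, f u with hFt
  have hcont : Continuous Ft := by
    apply Continuous.sub (hf.mul continuous_id)
    exact continuous_const.mul
      (intervalIntegral.continuous_primitive (fun a b => hf.intervalIntegrable a b) 0)
  obtain ⟨M, hM⟩ := (isCompact_Icc (a := (0:ℝ)) (b := t0)).exists_bound_of_continuousOn
    hcont.continuousOn
  have hM0 : 0 ≤ M := le_trans (norm_nonneg _) (hM 0 ⟨le_refl 0, ht0.le⟩)
  refine ⟨2 * M + 1, by linarith, ?_⟩
  intro s t hs hst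
  rcases le_or_gt t0 s with hcase | hcase
  · have := hmono s t hcase hst
    have : Ft s ≤ Ft t := this
    linarith
  · have hFs : |Ft s| ≤ M := hM s ⟨hs, hcase.le⟩
    rcases le_or_gt t0 t with hcase2 | hcase2
    · have h1 : Ft t0 ≤ Ft t := hmono t0 t le_rfl hcase2
      have h2 : |Ft t0| ≤ M := hM t0 ⟨ht0.le, le_rfl⟩
      have := abs_le.mp hFs
      have := abs_le.mp h2
      show Ft s ≤ Ft t + (2 * M + 1)
      linarith
    · have hFtb : |Ft t| ≤ M := hM t ⟨le_trans hs hst, hcase2.le⟩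
      have := abs_le.mp hFs
      have := abs_le.mp hFtb
      show Ft s ≤ Ft t + (2 * M + 1)
      linarith

/-- Under the same hypotheses as Statement 0, there exists a
constant `C₁ > 0` such that `F̃ s ≤ F̃ t + C₁` whenever `0 ≤ s ≤ t` or
`t ≤ s ≤ 0`, where `F̃ t = f t * t - p * ∫₀ᵗ f`. -/
theorem stmt_1 (p : ℝ) (hp : 1 < p) (f : ℝ → ℝ) (hf : Continuous f)
    (t0 : ℝ) (ht0 : 0 < t0)
    (hinc : MonotoneOn (fun t => f t / (|t| ^ (p - 2) * t)) (Set.Ici t0))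
    (hdec : AntitoneOn (fun t => f t / (|t| ^ (p - 2) * t)) (Set.Iic (-t0))) :
    ∃ C₁ : ℝ, 0 < C₁ ∧ ∀ s t : ℝ, ((0 ≤ s ∧ s ≤ t) ∨ (t ≤ s ∧ s ≤ 0)) →
      f s * s - p * ∫ u in (0:ℝ)..s, f u ≤
        (f t * t - p * ∫ u in (0:ℝ)..t, f u) + C₁ := by
  set f' : ℝ → ℝ := fun u => -f (-u) with hf'def
  have hf' : Continuous f' := (hf.comp continuous_neg).neg
  have hinc' : MonotoneOn (fun t => f' t / (|t| ^ (p - 2) * t)) (Set.Ici t0) := by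
    intro a ha b hb hab
    have hkey : ∀ x : ℝ, t0 ≤ x →
        f' x / (|x| ^ (p - 2) * x) = f (-x) / (|(-x)| ^ (p - 2) * (-x)) := by
      intro x hx
      rw [abs_neg]
      simp only [hf'def]
      rw [mul_neg, div_neg, neg_div]
    dsimp only
    rw [hkey a ha, hkey b hb]
    exact hdec (by simp; linarith [Set.mem_Ici.mp hb] : -b ∈ Set.Iic (-t0))
      (by simp; linarith [Set.mem_Ici.mp ha]) (by linarith)
  have hrefl : ∀ x : ℝ, f' x * x - p * ∫ u in (0:ℝ)..x, f' u
      = f (-x) * (-x) - p * ∫ u in (0:ℝ)..(-x), f u := by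
    intro x
    have h1 : (∫ u in (0:ℝ)..x, f' u) = ∫ u in (0:ℝ)..(-x), f u := by
      simp only [hf'def]
      rw [intervalIntegral.integral_neg, intervalIntegral.integral_comp_neg f]
      rw [neg_zero, intervalIntegral.integral_symm]
      ring_nf
    rw [h1]; simp only [hf'def]; ring
  obtain ⟨C, hC, hCspec⟩ := pos_half p hp f hf t0 ht0 (pos_mono p hp f hf t0 ht0 hinc)
  obtain ⟨C', hC', hC'spec⟩ := pos_half p hp f' hf' t0 ht0 (pos_mono p hp f' hf' t0 ht0 hinc')
  refine ⟨C + C', by linarith, ?_⟩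
  rintro s t (⟨hs, hst⟩ | ⟨hts, hs0⟩)
  · have := hCspec s t hs hst
    linarith
  · have h := hC'spec (-s) (-t) (by linarith) (by linarith)
    rw [hrefl (-s), hrefl (-t)] at h
    simp only [neg_neg] at h
    linarith
end

section
/- Let N ≥ 1 and 1 < p < 2. There exists a constant C_p > 0, depending only on p (and N), such that for all X, Y ∈ ℝ^N with (X, Y) ≠ (0, 0) one has ⟨a(X) − a(Y), X − Y⟩ ≥ C_p |X − Y|² / (|X| + |Y|)^{2−p}, where a is the p-Laplacian vector field. -/
open scoped InnerProductSpace

private lemma bern_aux (p : ℝ) (hp1 : 1 < p) (hp2 : p < 2) {r t : ℝ} (hr : 0 < r)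
    (ht : 0 < t) (htr : t ≤ r) :
    (p - 1) * (r - t) * r ^ (p - 2) ≤ r ^ (p - 1) - t ^ (p - 1) := by
  have key := rpow_one_add_le_one_add_mul_self (s := t / r - 1)
    (by have := div_pos ht hr; linarith) (p := p - 1) (by linarith) (by linarith)
  have e1 : (1 : ℝ) + (t / r - 1) = t / r := by ring
  rw [e1] at key
  have hdiv : (t / r) ^ (p - 1) = t ^ (p - 1) / r ^ (p - 1) := Real.div_rpow ht.le hr.le _
  have hrp : (0:ℝ) < r ^ (p - 1) := Real.rpow_pos_of_pos hr _
  have hcr : r ^ (p - 2) * r = r ^ (p - 1) := by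
    rw [show p - 1 = (p - 2) + 1 by ring, Real.rpow_add_one hr.ne']
  rw [hdiv, div_le_iff₀ hrp] at key
  have e2 : (1 + (p - 1) * (t / r - 1)) * r ^ (p - 1)
      = r ^ (p - 1) + (p - 1) * (t * r ^ (p - 2)) - (p - 1) * (r * r ^ (p - 2)) := by
    rw [← hcr]; field_simp; ring
  rw [e2] at key
  nlinarith [key]

private lemma key_scalar (p : ℝ) (hp1 : 1 < p) (hp2 : p < 2) {r t s : ℝ} (hr : 0 < r)
    (ht : 0 ≤ t) (htr : t ≤ r) (hs : |s| ≤ r * t) :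
    (p - 1) * ((r ^ 2 + t ^ 2 - 2 * s) * (r + t) ^ (p - 2)) ≤
      r ^ (p - 2) * r ^ 2 + t ^ (p - 2) * t ^ 2 - (r ^ (p - 2) + t ^ (p - 2)) * s := by
  rcases ht.eq_or_lt with h0 | ht'
  · have hs0 : s = 0 := by
      have := abs_nonneg s
      have : |s| = 0 := le_antisymm (by rw [← h0] at hs; simpa using hs) this
      exact abs_eq_zero.mp this
    subst hs0
    rw [← h0]
    have : (0:ℝ) ^ (p - 2) = 0 := Real.zero_rpow (by intro h; apply absurd h; intro h'; linarith)
    rw [this]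
    have hrp : (0:ℝ) < r ^ (p - 2) := Real.rpow_pos_of_pos hr _
    have : (r + 0 : ℝ) = r := by ring
    rw [this]
    nlinarith [mul_pos hrp (pow_pos hr 2)]
  · have hB : (0:ℝ) < (r + t) ^ (p - 2) := Real.rpow_pos_of_pos (by linarith) _
    have hc : (0:ℝ) < r ^ (p - 2) := Real.rpow_pos_of_pos hr _
    have hd : (0:ℝ) < t ^ (p - 2) := Real.rpow_pos_of_pos ht' _
    have h1 : (r + t) ^ (p - 2) ≤ r ^ (p - 2) :=
      Real.rpow_le_rpow_of_nonpos hr (by linarith) (by linarith)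
    have h2 : r ^ (p - 2) ≤ t ^ (p - 2) :=
      Real.rpow_le_rpow_of_nonpos ht' htr (by linarith)
    have hcr : r ^ (p - 2) * r = r ^ (p - 1) := by
      rw [show p - 1 = (p - 2) + 1 by ring, Real.rpow_add_one hr.ne']
    have hdt : t ^ (p - 2) * t = t ^ (p - 1) := by
      rw [show p - 1 = (p - 2) + 1 by ring, Real.rpow_add_one ht'.ne']
    have hbern := bern_aux p hp1 hp2 hr ht' htr
    -- hA : (p-1)*(r-t)*(r+t)^(p-2) ≤ c*r - d*t
    have hA : (p - 1) * (r - t) * (r + t) ^ (p - 2) ≤ r ^ (p - 2) * r - t ^ (p - 2) * t := by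
      have h5 : (p - 1) * (r - t) * (r + t) ^ (p - 2) ≤ (p - 1) * (r - t) * r ^ (p - 2) := by
        apply mul_le_mul_of_nonneg_left h1 (by nlinarith)
      rw [hcr, hdt]
      linarith
    have hC : 2 * (p - 1) * (r + t) ^ (p - 2) ≤ r ^ (p - 2) + t ^ (p - 2) := by
      nlinarith
    have hs1 : s ≤ r * t := le_trans (le_abs_self s) hs
    have f1 : (p - 1) * (r - t) * (r + t) ^ (p - 2) * (r - t) ≤
        (r ^ (p - 2) * r - t ^ (p - 2) * t) * (r - t) :=
      mul_le_mul_of_nonneg_right hA (by linarith)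
    have f2 : 2 * (p - 1) * (r + t) ^ (p - 2) * (r * t - s) ≤
        (r ^ (p - 2) + t ^ (p - 2)) * (r * t - s) :=
      mul_le_mul_of_nonneg_right hC (by linarith)
    nlinarith [f1, f2]

private lemma main_case (N : ℕ) (p : ℝ) (hp1 : 1 < p) (hp2 : p < 2)
    (X Y : EuclideanSpace ℝ (Fin N)) (hXY : ‖Y‖ ≤ ‖X‖) (hX : X ≠ 0) :
    (p - 1) * (‖X - Y‖ ^ (2:ℝ) / (‖X‖ + ‖Y‖) ^ (2 - p)) ≤
      ⟪(‖X‖ ^ (p - 2) • X) - (‖Y‖ ^ (p - 2) • Y), X - Y⟫_ℝ := by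
  have hr : 0 < ‖X‖ := norm_pos_iff.2 hX
  have ht : 0 ≤ ‖Y‖ := norm_nonneg _
  have hs : |⟪X, Y⟫_ℝ| ≤ ‖X‖ * ‖Y‖ := abs_real_inner_le_norm X Y
  have hinner : ⟪(‖X‖ ^ (p - 2) • X) - (‖Y‖ ^ (p - 2) • Y), X - Y⟫_ℝ =
      ‖X‖ ^ (p - 2) * ‖X‖ ^ 2 + ‖Y‖ ^ (p - 2) * ‖Y‖ ^ 2 -
        (‖X‖ ^ (p - 2) + ‖Y‖ ^ (p - 2)) * ⟪X, Y⟫_ℝ := by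
    rw [inner_sub_left, inner_sub_right, inner_sub_right, real_inner_smul_left,
      real_inner_smul_left, real_inner_smul_left, real_inner_smul_left,
      real_inner_self_eq_norm_sq, real_inner_self_eq_norm_sq, real_inner_comm Y X]
    ring
  have hnorm : ‖X - Y‖ ^ (2:ℝ) = ‖X‖ ^ 2 + ‖Y‖ ^ 2 - 2 * ⟪X, Y⟫_ℝ := by
    rw [show ((2:ℝ)) = ((2:ℕ):ℝ) by norm_num, Real.rpow_natCast, norm_sub_sq_real]
    ring
  have hdiv : ‖X - Y‖ ^ (2:ℝ) / (‖X‖ + ‖Y‖) ^ (2 - p) =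
      (‖X‖ ^ 2 + ‖Y‖ ^ 2 - 2 * ⟪X, Y⟫_ℝ) * (‖X‖ + ‖Y‖) ^ (p - 2) := by
    rw [hnorm, show (2 - p) = -(p - 2) by ring, Real.rpow_neg (by positivity), div_eq_mul_inv, inv_inv]
  rw [hinner, hdiv]
  exact key_scalar p hp1 hp2 hr ht hXY hs

/-- For `N ≥ 1` and `1 < p < 2`, there is a constant `C > 0` such
that for all `X, Y ∈ ℝ^N` with `(X, Y) ≠ (0, 0)`,
`⟨a X - a Y, X - Y⟩ ≥ C * ‖X - Y‖² / (‖X‖ + ‖Y‖)^(2-p)`, where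
`a ξ = ‖ξ‖^(p-2) • ξ` (with `a 0 = 0`) is the p-Laplacian vector field. -/
theorem stmt_4 (N : ℕ) (hN : 1 ≤ N) (p : ℝ) (hp1 : 1 < p) (hp2 : p < 2) :
    ∃ C : ℝ, 0 < C ∧ ∀ X Y : EuclideanSpace ℝ (Fin N), ¬(X = 0 ∧ Y = 0) →
      C * (‖X - Y‖ ^ (2:ℝ) / (‖X‖ + ‖Y‖) ^ (2 - p)) ≤
        ⟪(‖X‖ ^ (p - 2) • X) - (‖Y‖ ^ (p - 2) • Y), X - Y⟫_ℝ := by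
  refine ⟨p - 1, by linarith, ?_⟩
  intro X Y hne
  rcases le_total ‖Y‖ ‖X‖ with hle | hle
  · have hX : X ≠ 0 := by
      intro h
      apply hne
      refine ⟨h, ?_⟩
      rw [h] at hle
      simp only [norm_zero] at hle
      exact norm_le_zero_iff.mp hle
    exact main_case N p hp1 hp2 X Y hle hX
  · have hY : Y ≠ 0 := by
      intro h
      apply hne
      refine ⟨?_, h⟩
      rw [h] at hle
      simp only [norm_zero] at hle
      exact norm_le_zero_iff.mp hle
    have h := main_case N p hp1 hp2 Y X hle hY
    rw [norm_sub_rev Y X, add_comm ‖Y‖ ‖X‖] at h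
    have e : ⟪(‖Y‖ ^ (p - 2) • Y) - (‖X‖ ^ (p - 2) • X), Y - X⟫_ℝ =
        ⟪(‖X‖ ^ (p - 2) • X) - (‖Y‖ ^ (p - 2) • Y), X - Y⟫_ℝ := by
      rw [show (‖Y‖ ^ (p - 2) • Y) - (‖X‖ ^ (p - 2) • X)
          = -((‖X‖ ^ (p - 2) • X) - (‖Y‖ ^ (p - 2) • Y)) by abel,
        show Y - X = -(X - Y) by abel, inner_neg_neg]
    rw [e] at h
    exact h
end
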